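/- Let G : Ω → ℝ satisfy 0 ≤ G(x) ≤ θ and suppose √G is Lipschitz with constant L on Ω. Let X, Y be symmetric 2×2 matrices and μ₁, μ₂ ≥ 0 satisfying the block inequality [[X,0],[0,Y]] ≤ μ₁[[I,−I],[−I,I]] + μ₂[[I,0],[0,I]]. Then for all x, y ∈ Ω and all nonzero p, q ∈ ℝ², trace(A(x,p)X) + trace(A(y,q)Y) ≤ μ₁(2L²|x−y|² + 8θ·ρ(p,q)²) + 2μ₂θ, where A(x,p) = G(x)·(I − ppᵀ/|p|²) and ρ(p,q) = min(|p−q|/min(|p|,|q|), 1). -/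

import Mathlib

open Matrix

lemma norm_sq_two (w : EuclideanSpace ℝ (Fin 2)) : ‖w‖^2 = w 0^2 + w 1^2 := by
  rw [EuclideanSpace.norm_eq, Real.sq_sqrt (by positivity)]
  simp [Fin.sum_univ_two, Real.norm_eq_abs, sq_abs]

lemma unit_diff_le (p q : EuclideanSpace ℝ (Fin 2)) (hp : p ≠ 0) (hq : q ≠ 0) :
    ‖‖p‖⁻¹ • p - ‖q‖⁻¹ • q‖ ≤ 2 * ‖p - q‖ / ‖p‖ := by
  have hpn : (0:ℝ) < ‖p‖ := norm_pos_iff.2 hp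
  have hqn : (0:ℝ) < ‖q‖ := norm_pos_iff.2 hq
  have h1 : ‖p‖⁻¹ • p - ‖q‖⁻¹ • q = ‖p‖⁻¹ • (p - q) + (‖p‖⁻¹ - ‖q‖⁻¹) • q := by
    simp [smul_sub, sub_smul]
  rw [h1]
  calc ‖‖p‖⁻¹ • (p - q) + (‖p‖⁻¹ - ‖q‖⁻¹) • q‖
      ≤ ‖‖p‖⁻¹ • (p - q)‖ + ‖(‖p‖⁻¹ - ‖q‖⁻¹) • q‖ := norm_add_le _ _
    _ ≤ 2 * ‖p - q‖ / ‖p‖ := by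
        rw [norm_smul, norm_smul]
        have h2 : |‖p‖⁻¹ - ‖q‖⁻¹| * ‖q‖ = |‖q‖ - ‖p‖| / ‖p‖ := by
          rw [show ‖p‖⁻¹ - ‖q‖⁻¹ = (‖q‖ - ‖p‖) / (‖p‖ * ‖q‖) by field_simp]
          rw [abs_div, abs_of_pos (by positivity : (0:ℝ) < ‖p‖ * ‖q‖)]
          field_simp
        have h3 : |‖q‖ - ‖p‖| ≤ ‖p - q‖ := by
          rw [abs_sub_comm]; simpa using abs_norm_sub_norm_le p q
        simp only [Real.norm_eq_abs, norm_inv, abs_of_pos hpn]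
        rw [h2, inv_mul_eq_div, ← add_div, div_le_div_iff₀ hpn hpn]
        nlinarith

lemma psd_key (X Y : Matrix (Fin 2) (Fin 2) ℝ) (μ₁ μ₂ : ℝ)
    (hblock : (μ₁ • Matrix.fromBlocks 1 (-1) (-1) 1 +
        μ₂ • Matrix.fromBlocks 1 0 0 1 -
        Matrix.fromBlocks X 0 0 Y).PosSemidef) (s t : Fin 2 → ℝ) :
    s 0 * (X 0 0 * s 0 + X 0 1 * s 1) + s 1 * (X 1 0 * s 0 + X 1 1 * s 1)
    + (t 0 * (Y 0 0 * t 0 + Y 0 1 * t 1) + t 1 * (Y 1 0 * t 0 + Y 1 1 * t 1))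
    ≤ μ₁ * ((s 0 - t 0)^2 + (s 1 - t 1)^2) + μ₂ * ((s 0^2 + s 1^2) + (t 0^2 + t 1^2)) := by
  have key := hblock.dotProduct_mulVec_nonneg (Sum.elim s t)
  simp only [Matrix.sub_mulVec, Matrix.add_mulVec, Matrix.smul_mulVec,
    Matrix.fromBlocks_mulVec, dotProduct, Fintype.sum_sum_type, Fin.sum_univ_two,
    Sum.elim_inl, Sum.elim_inr, Pi.sub_apply, Pi.add_apply, Pi.smul_apply,
    Matrix.mulVec, Matrix.one_apply, Matrix.neg_apply, smul_eq_mul,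
    Matrix.zero_apply, RCLike.star_def, star_trivial] at key
  simp [Matrix.sub_apply, Matrix.add_apply, Matrix.smul_apply, Matrix.fromBlocks_apply₁₁,
    Matrix.fromBlocks_apply₁₂, Matrix.fromBlocks_apply₂₁, Matrix.fromBlocks_apply₂₂,
    Matrix.one_apply, Fin.ext_iff] at key
  nlinarith [key]

lemma quad_bound (a b c0 c1 w0 w1 Lx θ ρ2 : ℝ) (hu : c0^2 + c1^2 = 1)
    (hab : (a - b)^2 ≤ Lx) (hbθ : b^2 ≤ θ) (hw : w0^2 + w1^2 ≤ 4 * ρ2)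
    (hρ2 : 0 ≤ ρ2) (hθ : 0 ≤ θ) :
    ((a - b) * c0 + b * (-w1))^2 + ((a - b) * c1 + b * w0)^2 ≤ 2 * Lx + 8 * θ * ρ2 := by
  nlinarith [sq_nonneg ((a - b) * c0 - b * w1), sq_nonneg ((a - b) * c1 + b * w0),
    sq_nonneg ((a - b) * c0 + b * w1), sq_nonneg ((a - b) * c1 - b * w0),
    mul_le_mul_of_nonneg_left hw (sq_nonneg b), mul_le_mul_of_nonneg_right hbθ hρ2,
    sq_nonneg (a - b), sq_nonneg b]

theorem I7_trace_estimate
    (Ω : Set (EuclideanSpace ℝ (Fin 2)))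
    (G : EuclideanSpace ℝ (Fin 2) → ℝ) (θ L : ℝ)
    (hG : ∀ x ∈ Ω, 0 ≤ G x ∧ G x ≤ θ)
    (hL : ∀ x ∈ Ω, ∀ y ∈ Ω, |Real.sqrt (G x) - Real.sqrt (G y)| ≤ L * ‖x - y‖)
    (X Y : Matrix (Fin 2) (Fin 2) ℝ) (hX : X.IsSymm) (hY : Y.IsSymm)
    (μ₁ μ₂ : ℝ) (hμ₁ : 0 ≤ μ₁) (hμ₂ : 0 ≤ μ₂)
    (hblock : (μ₁ • Matrix.fromBlocks 1 (-1) (-1) 1 +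
        μ₂ • Matrix.fromBlocks 1 0 0 1 -
        Matrix.fromBlocks X 0 0 Y).PosSemidef)
    (x y : EuclideanSpace ℝ (Fin 2)) (hx : x ∈ Ω) (hy : y ∈ Ω)
    (p q : EuclideanSpace ℝ (Fin 2)) (hp : p ≠ 0) (hq : q ≠ 0) :
    let A : EuclideanSpace ℝ (Fin 2) → EuclideanSpace ℝ (Fin 2) →
        Matrix (Fin 2) (Fin 2) ℝ := fun z v =>
      (G z / ‖v‖ ^ 2) • !![(v 1) ^ 2, -(v 0 * v 1); -(v 0 * v 1), (v 0) ^ 2]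
    let ρ : ℝ := min (‖p - q‖ / min ‖p‖ ‖q‖) 1
    (A x p * X).trace + (A y q * Y).trace ≤
      μ₁ * (2 * L ^ 2 * ‖x - y‖ ^ 2 + 8 * θ * ρ ^ 2) + 2 * μ₂ * θ := by
  intro A ρ
  obtain ⟨hGx0, hGxθ⟩ := hG x hx
  obtain ⟨hGy0, hGyθ⟩ := hG y hy
  have hpn : (0:ℝ) < ‖p‖ := norm_pos_iff.2 hp
  have hqn : (0:ℝ) < ‖q‖ := norm_pos_iff.2 hq
  set a := Real.sqrt (G x) with ha
  set b := Real.sqrt (G y) with hb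
  have ha2 : a^2 = G x := Real.sq_sqrt hGx0
  have hb2 : b^2 = G y := Real.sq_sqrt hGy0
  have hb0 : 0 ≤ b := Real.sqrt_nonneg _
  set s : Fin 2 → ℝ := ![a * (-(p 1) / ‖p‖), a * (p 0 / ‖p‖)] with hs
  set t : Fin 2 → ℝ := ![b * (-(q 1) / ‖q‖), b * (q 0 / ‖q‖)] with ht
  have hs0 : s 0 = a * (-(p 1) / ‖p‖) := rfl
  have hs1 : s 1 = a * (p 0 / ‖p‖) := rfl
  have ht0 : t 0 = b * (-(q 1) / ‖q‖) := rfl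
  have ht1 : t 1 = b * (q 0 / ‖q‖) := rfl
  have hnp : ‖p‖^2 = p 0^2 + p 1^2 := norm_sq_two p
  have hnq : ‖q‖^2 = q 0^2 + q 1^2 := norm_sq_two q
  -- trace identities
  have trX : (A x p * X).trace =
      s 0 * (X 0 0 * s 0 + X 0 1 * s 1) + s 1 * (X 1 0 * s 0 + X 1 1 * s 1) := by
    simp only [A, Matrix.trace, Matrix.diag, Matrix.mul_apply, Fin.sum_univ_two,
      Matrix.smul_apply, smul_eq_mul, Matrix.cons_val', Matrix.cons_val_zero,
      Matrix.cons_val_one, Matrix.head_cons, Matrix.head_fin_const, Matrix.empty_val',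
      Matrix.cons_val_fin_one, Matrix.of_apply]
    rw [hs0, hs1, ← ha2]
    field_simp
    ring
  have trY : (A y q * Y).trace =
      t 0 * (Y 0 0 * t 0 + Y 0 1 * t 1) + t 1 * (Y 1 0 * t 0 + Y 1 1 * t 1) := by
    simp only [A, Matrix.trace, Matrix.diag, Matrix.mul_apply, Fin.sum_univ_two,
      Matrix.smul_apply, smul_eq_mul, Matrix.cons_val', Matrix.cons_val_zero,
      Matrix.cons_val_one, Matrix.head_cons, Matrix.head_fin_const, Matrix.empty_val',
      Matrix.cons_val_fin_one, Matrix.of_apply]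
    rw [ht0, ht1, ← hb2]
    field_simp
    ring
  -- norms of s, t
  have hsn : s 0^2 + s 1^2 = G x := by
    rw [hs0, hs1, ← ha2]
    field_simp
    linear_combination (-a^2) * hnp
  have htn : t 0^2 + t 1^2 = G y := by
    rw [ht0, ht1, ← hb2]
    field_simp
    linear_combination (-b^2) * hnq
  -- the unit vector difference
  set w : EuclideanSpace ℝ (Fin 2) := ‖p‖⁻¹ • p - ‖q‖⁻¹ • q with hwdef
  have hw0 : w 0 = p 0 / ‖p‖ - q 0 / ‖q‖ := by
    simp [hwdef, div_eq_inv_mul]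
  have hw1 : w 1 = p 1 / ‖p‖ - q 1 / ‖q‖ := by
    simp [hwdef, div_eq_inv_mul]
  have hρ0 : (0:ℝ) ≤ ρ := le_min (by positivity) zero_le_one
  have hw2ρ : ‖w‖ ≤ 2 * ρ := by
    have h1 : ‖w‖ ≤ 2 * ‖p - q‖ / ‖p‖ := unit_diff_le p q hp hq
    have h2 : ‖w‖ ≤ 2 * ‖p - q‖ / ‖q‖ := by
      have := unit_diff_le q p hq hp
      rw [norm_sub_rev, show ‖q - p‖ = ‖p - q‖ from norm_sub_rev q p] at this
      exact this
    have h3 : ‖w‖ ≤ 2 := by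
      calc ‖w‖ ≤ ‖‖p‖⁻¹ • p‖ + ‖‖q‖⁻¹ • q‖ := norm_sub_le _ _
        _ = 2 := by
            rw [norm_smul, norm_smul]
            simp [Real.norm_eq_abs, abs_of_pos hpn, abs_of_pos hqn,
              inv_mul_cancel₀ hpn.ne', inv_mul_cancel₀ hqn.ne']
            norm_num [inv_mul_cancel₀ hpn.ne', inv_mul_cancel₀ hqn.ne']
    rcases le_total (‖p - q‖ / min ‖p‖ ‖q‖) 1 with h | h
    · have hρ : ρ = ‖p - q‖ / min ‖p‖ ‖q‖ := min_eq_left h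
      rw [hρ]
      rcases min_cases ‖p‖ ‖q‖ with ⟨hm, _⟩ | ⟨hm, _⟩ <;> rw [hm]
      · calc ‖w‖ ≤ 2 * ‖p - q‖ / ‖p‖ := h1
          _ = 2 * (‖p - q‖ / ‖p‖) := by ring
      · calc ‖w‖ ≤ 2 * ‖p - q‖ / ‖q‖ := h2
          _ = 2 * (‖p - q‖ / ‖q‖) := by ring
    · have hρ : ρ = 1 := min_eq_right h
      rw [hρ]; linarith
  have hwsq : w 0^2 + w 1^2 ≤ 4 * ρ^2 := by
    rw [← norm_sq_two]
    calc ‖w‖^2 ≤ (2*ρ)^2 := pow_le_pow_left₀ (norm_nonneg w) hw2ρ 2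
      _ = 4 * ρ^2 := by ring
  -- Lipschitz bound
  have hab : (a - b)^2 ≤ L^2 * ‖x - y‖^2 := by
    have h := hL x hx y hy
    calc (a - b)^2 = |a - b|^2 := (sq_abs _).symm
      _ ≤ (L * ‖x - y‖)^2 := pow_le_pow_left₀ (abs_nonneg _) h 2
      _ = L^2 * ‖x - y‖^2 := by ring
  -- diff estimate
  have hdiff : (s 0 - t 0)^2 + (s 1 - t 1)^2 ≤ 2 * L^2 * ‖x - y‖^2 + 8 * θ * ρ^2 := by
    have e0 : s 0 - t 0 = (a - b) * (-(p 1) / ‖p‖) + b * (-(w 1)) := by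
      rw [hs0, ht0, hw1]; ring
    have e1 : s 1 - t 1 = (a - b) * (p 0 / ‖p‖) + b * (w 0) := by
      rw [hs1, ht1, hw0]; ring
    have hu : (-(p 1) / ‖p‖)^2 + (p 0 / ‖p‖)^2 = 1 := by
      field_simp
      linear_combination -hnp
    have hbθ : b^2 ≤ θ := by rw [hb2]; exact hGyθ
    rw [e0, e1]
    have hθ0 : (0:ℝ) ≤ θ := le_trans hGy0 hGyθ
    have HQ := quad_bound a b (-(p 1) / ‖p‖) (p 0 / ‖p‖) (w 0) (w 1)
      (L^2 * ‖x - y‖^2) θ (ρ^2) hu hab hbθ hwsq (sq_nonneg ρ) hθ0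
    linarith [HQ]
  -- combine
  have key := psd_key X Y μ₁ μ₂ hblock s t
  have F1 := mul_le_mul_of_nonneg_left hdiff hμ₁
  have F2 : μ₂ * ((s 0^2 + s 1^2) + (t 0^2 + t 1^2)) ≤ 2 * μ₂ * θ := by
    rw [hsn, htn]
    calc μ₂ * (G x + G y) ≤ μ₂ * (θ + θ) :=
          mul_le_mul_of_nonneg_left (add_le_add hGxθ hGyθ) hμ₂
      _ = 2 * μ₂ * θ := by ring
  rw [trX, trY]
  linarith [key, F1, F2]
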